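/- arXiv:2402.01953 — 3 statements merged into one kernel-verified Lean document; each statement's English description precedes it below -/
import Mathlib

section
/- Let d = 3, Q_1 = [0,1/5]^3 and Q_2 = [2/5,3/5]^3, both elements of Q_1^(3)(F^(3)). For every real p with 1 < p < log 16 / log 5, the ratio E_{p,m}(Q_1, Γ(Q_1)^c) / E_{p,m}(Q_2, Γ(Q_2)^c) tends to +∞ as m → ∞. -/
open Set MeasureTheory Filter
open scoped Classical

noncomputable section

/-- Points of `ℝ^d` with the Euclidean metric. -/
abbrev Pt (d : ℕ) := EuclideanSpace ℝ (Fin d)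

/-- The closed cube `∏ [(lᵢ-1)/5ⁿ, lᵢ/5ⁿ]`. -/
def cube (d n : ℕ) (l : Fin d → ℕ) : Set (Pt d) :=
  {x | ∀ i, ((l i : ℝ) - 1) / 5 ^ n ≤ x i ∧ x i ≤ (l i : ℝ) / 5 ^ n}

/-- The collection `𝒬ₙ⁽ᵈ⁾` of level-`n` cubes. -/
def Qcol (d n : ℕ) : Set (Set (Pt d)) :=
  {Q | ∃ l : Fin d → ℕ, (∀ i, 1 ≤ l i ∧ l i ≤ 5 ^ n) ∧ Q = cube d n l}

/-- `𝒬ₙ⁽ᵈ⁾(A)`: the level-`n` cubes whose interior meets `A`. -/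
def QcolOf (d n : ℕ) (A : Set (Pt d)) : Set (Set (Pt d)) :=
  {Q | Q ∈ Qcol d n ∧ (interior Q ∩ A).Nonempty}

/-- `F₀⁽ᵈ⁾ = [0,1]^d`. -/
def F0 (d : ℕ) : Set (Pt d) := {x | ∀ i, x i ∈ Icc (0 : ℝ) 1}

/-- `F₁⁽ᵈ⁾`. -/
def F1 (d : ℕ) : Set (Pt d) :=
  F0 d \ ⋃ i : Fin d, {x | (∀ j, j < i → x j ∈ Ioo (2/5 : ℝ) (3/5)) ∧
    x i ∈ Ioo (1/5 : ℝ) (2/5) ∪ Ioo (3/5 : ℝ) (4/5) ∧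
    ∀ j, i < j → x j ∈ Ioo (2/5 : ℝ) (3/5)}

/-- The orientation-preserving affine map from `[0,1]^d` onto the cube indexed by `l` at
level `n`. -/
def psi (d n : ℕ) (l : Fin d → ℕ) (x : Pt d) : Pt d :=
  WithLp.toLp 2 (fun i => ((l i : ℝ) - 1) / 5 ^ n + x i / 5 ^ n)

/-- The approximations `Fₙ⁽ᵈ⁾`. -/
def Fn (d : ℕ) : ℕ → Set (Pt d)
  | 0 => F0 d
  | 1 => F1 d
  | n + 2 => ⋃ l ∈ {l : Fin d → ℕ | cube d 1 l ∈ QcolOf d 1 (F1 d)}, psi d 1 l '' Fn d (n + 1)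

/-- The fractal `F⁽ᵈ⁾`. -/
def Fset (d : ℕ) : Set (Pt d) := ⋂ n, Fn d n

/-- `G₁⁽ᵈ⁾`: union of the level-1 cubes of `F₁⁽ᵈ⁾` which meet the boundary of `[0,1]^d`. -/
def G1 (d : ℕ) : Set (Pt d) :=
  ⋃ Q ∈ {Q | Q ∈ QcolOf d 1 (F1 d) ∧ (Q ∩ frontier (F0 d)).Nonempty}, Q

/-- The approximations `Gₙ⁽ᵈ⁾`. -/
def Gn (d : ℕ) : ℕ → Set (Pt d)
  | 0 => F0 d
  | 1 => G1 d
  | n + 2 => ⋃ l ∈ {l : Fin d → ℕ | cube d 1 l ∈ QcolOf d 1 (G1 d)}, psi d 1 l '' Gn d (n + 1)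

/-- The boundary fractal `G⁽ᵈ⁾ = [0,1]^d ∩ ⋂_{n ≥ 1} Gₙ⁽ᵈ⁾`. -/
def Gset (d : ℕ) : Set (Pt d) := F0 d ∩ ⋂ n, ⋂ (_ : 1 ≤ n), Gn d n

/-- The discrete `p`-energy `𝓔ₚⁿ(f)` on the level-`n` cubes of `F⁽ᵈ⁾`. -/
def energy (d n : ℕ) (p : ℝ) (f : Set (Pt d) → ℝ) : ℝ :=
  (1 / 2) * ∑' Q : QcolOf d n (Fset d), ∑' Q' : QcolOf d n (Fset d),
    if ((Q : Set (Pt d)) ∩ (Q' : Set (Pt d))).Nonempty then |f Q - f Q'| ^ p else 0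

/-- `Sᵐ(A)`: level-`(n+m)` cubes of `F⁽ᵈ⁾` contained in some cube of `A`. -/
def Sm (d n m : ℕ) (A : Set (Set (Pt d))) : Set (Set (Pt d)) :=
  {Q | Q ∈ QcolOf d (n + m) (Fset d) ∧ ∃ Q' ∈ A, Q ⊆ Q'}

/-- The effective `p`-conductance `𝓔_{p,m}(A₁, A₂)`. -/
def conduct (d n m : ℕ) (p : ℝ) (A₁ A₂ : Set (Set (Pt d))) : ℝ :=
  sInf {e : ℝ | ∃ f : Set (Pt d) → ℝ,
    (∀ Q ∈ Sm d n m A₁, f Q = 1) ∧ (∀ Q ∈ Sm d n m A₂, f Q = 0) ∧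
    e = energy d (n + m) p f}

/-- `Γ(Q)`: level-`n` cubes of `F⁽ᵈ⁾` meeting `Q`. -/
def Gam (d n : ℕ) (Q : Set (Pt d)) : Set (Set (Pt d)) :=
  {Q' | Q' ∈ QcolOf d n (Fset d) ∧ (Q' ∩ Q).Nonempty}

/-- `Γ(Q)ᶜ = 𝒬ₙ⁽ᵈ⁾(F⁽ᵈ⁾) \ Γ(Q)`. -/
def GamC (d n : ℕ) (Q : Set (Pt d)) : Set (Set (Pt d)) :=
  QcolOf d n (Fset d) \ Gam d n Q

/-- The corner cube `[0, 1/5]^d`. -/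
def Qone (d : ℕ) : Set (Pt d) := {x | ∀ i, x i ∈ Icc (0 : ℝ) (1/5)}

/-- The center cube `[2/5, 3/5]^d`. -/
def Qtwo (d : ℕ) : Set (Pt d) := {x | ∀ i, x i ∈ Icc (2/5 : ℝ) (3/5)}

end

/-!
A level-`(1 + m)` cube of index `l` meets `F⁽³⁾` as soon as no base-5 digit vector of `l - 1` is
one of the six holes cut out in `F₁⁽³⁾`. Hence the `16ᵐ` vertical columns of cubes over the squares
of `[0,1/5]²` whose digits avoid `2` lie in `F⁽³⁾`; each runs through `3·5ᵐ` cubes from `Q₁` to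
`[0,1/5]² × [2/5,3/5] ∈ Γ(Q₁)ᶜ`, so by Hölder's inequality an admissible function spends
`p`-energy at least `(3·5ᵐ)^(1-p)` on each, and `𝓔_{p,m}(Q₁, Γ(Q₁)ᶜ) ≳ 16ᵐ 5^(m(1-p))`.

For `Q₂` the indicator of the cubes inside `Q₂` is admissible. It only jumps between touching
cubes of which one lies in the layer of cubes around `Q₂`; the layer cubes off the edges of that
layer sit in holes of `F₁⁽³⁾`, so there are `O(5ᵐ)` such pairs and `𝓔_{p,m}(Q₂, Γ(Q₂)ᶜ) = O(5ᵐ)`,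
while a diagonal chain of cubes of `F⁽³⁾` from `Γ(Q₂)ᶜ` to `Q₂` keeps it positive. The ratio is
therefore `≳ (16 / 5ᵖ)ᵐ`, which tends to infinity because `5ᵖ < 16`.
-/

namespace SierpinskiCarpet

noncomputable section Cubes

variable {d : ℕ}

def openBox (d N : ℕ) (l : Fin d → ℕ) : Set (Pt d) :=
  {x | ∀ i, x i ∈ Ioo (((l i : ℝ) - 1) / 5 ^ N) ((l i : ℝ) / 5 ^ N)}

theorem interior_cube (N : ℕ) (l : Fin d → ℕ) : interior (cube d N l) = openBox d N l := by
  have hcube : cube d N l = PiLp.homeomorph 2 (fun _ : Fin d => ℝ) ⁻¹'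
      univ.pi fun i => Icc (((l i : ℝ) - 1) / 5 ^ N) ((l i : ℝ) / 5 ^ N) := by
    ext x; simp only [mem_preimage, mem_univ_pi]; rfl
  rw [hcube, ← Homeomorph.preimage_interior, interior_pi_set finite_univ]
  ext x; simp only [mem_preimage, mem_univ_pi, interior_Icc]; rfl

/-- The offset `3/4` makes `pt d 0 1 = (1/4, …, 1/4)` a fixed point of `psi d 1 (fun _ => 2)`. -/
def pt (d N : ℕ) (l : Fin d → ℕ) : Pt d := WithLp.toLp 2 fun i => ((l i : ℝ) - 3 / 4) / 5 ^ N

theorem pt_mem_openBox (N : ℕ) (l : Fin d → ℕ) : pt d N l ∈ openBox d N l := fun i => by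
  constructor <;> simp only [pt, PiLp.toLp_apply] <;> gcongr <;> norm_num

theorem pt_mem_cube (N : ℕ) (l : Fin d → ℕ) : pt d N l ∈ cube d N l := fun i =>
  ⟨(pt_mem_openBox N l i).1.le, (pt_mem_openBox N l i).2.le⟩

theorem cube_inter_nonempty_iff {N : ℕ} {l l' : Fin d → ℕ} :
    (cube d N l ∩ cube d N l').Nonempty ↔ ∀ i, l' i ≤ l i + 1 ∧ l i ≤ l' i + 1 := by
  have h5 : (0 : ℝ) < 5 ^ N := by positivity
  constructor
  · rintro ⟨x, hx, hx'⟩ i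
    have h1 := (hx i).2.trans' (hx' i).1
    have h2 := (hx' i).2.trans' (hx i).1
    rw [div_le_div_iff_of_pos_right h5] at h1 h2
    constructor
    · exact_mod_cast (by linarith : (l' i : ℝ) ≤ l i + 1)
    · exact_mod_cast (by linarith : (l i : ℝ) ≤ l' i + 1)
  · intro h
    refine ⟨WithLp.toLp 2 fun i => (max (l i : ℝ) (l' i) - 1) / 5 ^ N, fun i => ?_, fun i => ?_⟩ <;>
    · have h₁ : (l' i : ℝ) ≤ l i + 1 := by exact_mod_cast (h i).1
      have h₂ : (l i : ℝ) ≤ l' i + 1 := by exact_mod_cast (h i).2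
      simp only [div_le_div_iff_of_pos_right h5, sub_le_iff_le_add]
      constructor
      · linarith [le_max_left (l i : ℝ) (l' i), le_max_right (l i : ℝ) (l' i)]
      · exact max_le (by linarith) (by linarith)

theorem cube_subset_cube_iff {n m : ℕ} {l k : Fin d → ℕ} :
    cube d (n + m) l ⊆ cube d n k ↔ ∀ i, k i * 5 ^ m < l i + 5 ^ m ∧ l i ≤ k i * 5 ^ m := by
  have hn : (0 : ℝ) < 5 ^ n := by positivity
  have hm : (0 : ℝ) < 5 ^ m := by positivity
  have hnm : (5 : ℝ) ^ (n + m) = 5 ^ n * 5 ^ m := pow_add _ _ _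
  constructor
  · intro h i
    have hx := h (pt_mem_cube (n + m) l) i
    simp only [pt, PiLp.toLp_apply, hnm, div_le_div_iff₀ hn (mul_pos hn hm),
      div_le_div_iff₀ (mul_pos hn hm) hn] at hx
    have h1 : ((k i : ℝ) - 1) * 5 ^ m ≤ l i - 3 / 4 := by nlinarith
    have h2 : (l i : ℝ) - 3 / 4 ≤ k i * 5 ^ m := by nlinarith
    constructor
    · exact_mod_cast (by linarith : (k i : ℝ) * 5 ^ m < l i + 5 ^ m)
    · exact Nat.lt_succ_iff.1 (by exact_mod_cast (by linarith : (l i : ℝ) < k i * 5 ^ m + 1))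
  · intro h x hx i
    have ⟨h1, h2⟩ := h i
    have h1' : ((k i : ℝ) - 1) * 5 ^ m ≤ l i - 1 := by
      have : (k i : ℝ) * 5 ^ m + 1 ≤ l i + 5 ^ m := by exact_mod_cast h1
      linarith
    have h2' : (l i : ℝ) ≤ k i * 5 ^ m := by exact_mod_cast h2
    have ⟨hx1, hx2⟩ := hx i
    rw [hnm] at hx1 hx2
    constructor
    · refine le_trans ?_ hx1
      rw [div_le_div_iff₀ hn (mul_pos hn hm)]; nlinarith
    · refine hx2.trans ?_
      rw [div_le_div_iff₀ (mul_pos hn hm) hn]; nlinarith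

theorem cube_injective (N : ℕ) : Function.Injective (cube d N) := fun l l' h => by
  have h₁ := cube_subset_cube_iff (m := 0).1 (h ▸ subset_rfl : cube d (N + 0) l ⊆ cube d N l')
  have h₂ := cube_subset_cube_iff (m := 0).1 (h ▸ subset_rfl : cube d (N + 0) l' ⊆ cube d N l)
  simp only [pow_zero, mul_one] at h₁ h₂
  funext i
  have := h₁ i; have := h₂ i
  omega

open Finset in
theorem card_le_three_pow_mul_card {d N : ℕ} {Y : Finset (Set (Pt d) × Set (Pt d))}
    {S : Finset (Fin d → ℕ)}
    (hY : ∀ z ∈ Y, z.1 ∈ Qcol d N ∧ (z.1 ∩ z.2).Nonempty ∧ ∃ l ∈ S, z.2 = cube d N l) :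
    #Y ≤ 3 ^ d * #S := by
  have hsub : Y ⊆ (S ×ˢ Fintype.piFinset fun _ => range 3).image
      fun q => (cube d N fun i => q.1 i + q.2 i - 1, cube d N q.1) := by
    intro z hz
    obtain ⟨⟨l₁, -, hz₁⟩, htouch, l, hl, hz₂⟩ := hY z hz
    rw [hz₁, hz₂] at htouch
    have hclose := cube_inter_nonempty_iff.1 htouch
    refine mem_image.2 ⟨(l, fun i => l₁ i + 1 - l i), mem_product.2 ⟨hl,
      Fintype.mem_piFinset.2 fun i => Finset.mem_range.2 (show l₁ i + 1 - l i < 3 by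
        have := hclose i; omega)⟩, ?_⟩
    refine Prod.ext ?_ hz₂.symm
    rw [hz₁]
    refine congrArg (cube d N) (funext fun i => ?_)
    have := hclose i
    dsimp only
    omega
  calc #Y ≤ _ := card_le_card hsub
    _ ≤ _ := card_image_le
    _ = 3 ^ d * #S := by simp [card_product, mul_comm]

theorem Qone_eq_cube : Qone d = cube d 1 fun _ => 1 := by
  ext x; simp [Qone, cube]

theorem Qtwo_eq_cube : Qtwo d = cube d 1 fun _ => 3 := by
  ext x; simp only [Qtwo, cube, mem_ofPred_eq, mem_Icc]; norm_num

end Cubes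

noncomputable section Energy

open Finset

variable {d : ℕ}

theorem QcolOf_finite (d n : ℕ) (A : Set (Pt d)) : (QcolOf d n A).Finite := by
  refine ((Set.Finite.pi fun _ => Set.finite_Iic (5 ^ n)).image (cube d n)).subset ?_
  rintro Q ⟨⟨l, hl, rfl⟩, -⟩
  exact ⟨l, fun i _ => (hl i).2, rfl⟩

abbrev cubesF (d n : ℕ) : Finset (Set (Pt d)) := (QcolOf_finite d n (Fset d)).toFinset

theorem energy_eq_sum (n : ℕ) (p : ℝ) (f : Set (Pt d) → ℝ) :
    energy d n p f = 1 / 2 * ∑ z ∈ cubesF d n ×ˢ cubesF d n,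
      if (z.1 ∩ z.2).Nonempty then |f z.1 - f z.2| ^ p else 0 := by
  have hS := QcolOf_finite d n (Fset d)
  have key : ∀ g : Set (Pt d) → ℝ, ∑' Q : QcolOf d n (Fset d), g Q = ∑ Q ∈ cubesF d n, g Q :=
    fun g => by rw [← Finset.tsum_subtype', hS.coe_toFinset]
  have key₂ : ∀ g : Set (Pt d) → Set (Pt d) → ℝ,
      ∑' (Q : QcolOf d n (Fset d)) (Q' : QcolOf d n (Fset d)), g Q Q' =
        ∑ Q ∈ cubesF d n, ∑ Q' ∈ cubesF d n, g Q Q' :=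
    fun g => (key fun Q => ∑' Q' : QcolOf d n (Fset d), g Q Q').trans
      (sum_congr rfl fun Q _ => key (g Q))
  rw [energy, sum_product]
  exact congrArg _ (key₂ fun Q Q' => if (Q ∩ Q').Nonempty then |f Q - f Q'| ^ p else 0)

theorem energy_nonneg (n : ℕ) (p : ℝ) (f : Set (Pt d) → ℝ) : 0 ≤ energy d n p f := by
  refine mul_nonneg (by norm_num) (tsum_nonneg fun Q => tsum_nonneg fun Q' => ?_)
  split_ifs
  exacts [Real.rpow_nonneg (abs_nonneg _) p, le_rfl]

theorem sum_edges_le_two_mul_energy {ι : Type*} {n : ℕ} {p : ℝ} (f : Set (Pt d) → ℝ)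
    {s : Finset ι} {e : ι → Set (Pt d) × Set (Pt d)} (he : Set.InjOn e s)
    (hmem : ∀ i ∈ s, (e i).1 ∈ QcolOf d n (Fset d) ∧ (e i).2 ∈ QcolOf d n (Fset d))
    (htouch : ∀ i ∈ s, ((e i).1 ∩ (e i).2).Nonempty) :
    ∑ i ∈ s, |f (e i).1 - f (e i).2| ^ p ≤ 2 * energy d n p f := by
  rw [energy_eq_sum, ← mul_assoc, show (2 : ℝ) * (1 / 2) = 1 by norm_num, one_mul]
  calc ∑ i ∈ s, |f (e i).1 - f (e i).2| ^ p
      = ∑ z ∈ s.image e, if (z.1 ∩ z.2).Nonempty then |f z.1 - f z.2| ^ p else 0 := by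
        rw [sum_image he]
        exact sum_congr rfl fun i hi => (if_pos (htouch i hi)).symm
    _ ≤ _ := by
        refine sum_le_sum_of_subset_of_nonneg ?_ fun z _ _ => ?_
        · intro z hz
          obtain ⟨i, hi, rfl⟩ := mem_image.1 hz
          simpa using hmem i hi
        · split_ifs
          exacts [Real.rpow_nonneg (abs_nonneg _) p, le_rfl]

theorem rpow_one_sub_le_sum_abs_sub_rpow {p : ℝ} (hp : 1 ≤ p) {L : ℕ} (hL : 0 < L) (g : ℕ → ℝ)
    (h : 1 ≤ |g 0 - g L|) : (L : ℝ) ^ (1 - p) ≤ ∑ t ∈ range L, |g t - g (t + 1)| ^ p := by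
  have hsum : 1 ≤ ∑ t ∈ range L, |g t - g (t + 1)| :=
    h.trans (by rw [← sum_range_sub']; exact abs_sum_le_sum_abs _ _)
  have hholder := Real.rpow_sum_le_const_mul_sum_rpow (range L) (fun t => g t - g (t + 1)) hp
  rw [card_range] at hholder
  have hLp : 0 < (L : ℝ) ^ (p - 1) := Real.rpow_pos_of_pos (by exact_mod_cast hL) _
  rw [show 1 - p = -(p - 1) by ring, Real.rpow_neg (Nat.cast_nonneg L), inv_le_iff_one_le_mul₀' hLp]
  exact (Real.one_le_rpow hsum (by linarith : (0 : ℝ) ≤ p)).trans hholder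

theorem card_mul_rpow_div_two_le_energy {ι : Type*} {n : ℕ} {p : ℝ} (hp : 1 ≤ p)
    (f : Set (Pt d) → ℝ) {s : Finset ι} {L : ℕ} (hL : 0 < L) (P : ι → ℕ → Set (Pt d))
    (hmem : ∀ a ∈ s, ∀ t ≤ L, P a t ∈ QcolOf d n (Fset d))
    (htouch : ∀ a ∈ s, ∀ t < L, (P a t ∩ P a (t + 1)).Nonempty)
    (hinj : ∀ a ∈ s, ∀ b ∈ s, ∀ t < L, ∀ t' < L, P a t = P b t' → a = b ∧ t = t')
    (hend : ∀ a ∈ s, 1 ≤ |f (P a 0) - f (P a L)|) :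
    #s * (L : ℝ) ^ (1 - p) / 2 ≤ energy d n p f := by
  have hedges := sum_edges_le_two_mul_energy (p := p) f (s := s ×ˢ range L)
    (e := fun w => (P w.1 w.2, P w.1 (w.2 + 1)))
    (fun w hw w' hw' h => by
      simp only [coe_product, coe_range, Set.mem_prod, Set.mem_Iio] at hw hw'
      obtain ⟨h₁, h₂⟩ := hinj _ hw.1 _ hw'.1 _ hw.2 _ hw'.2 (congrArg Prod.fst h)
      exact Prod.ext h₁ h₂)
    (fun w hw => by
      simp only [mem_product, Finset.mem_range] at hw
      exact ⟨hmem _ hw.1 _ hw.2.le, hmem _ hw.1 _ hw.2⟩)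
    (fun w hw => by
      simp only [mem_product, Finset.mem_range] at hw
      exact htouch _ hw.1 _ hw.2)
  have hpaths : #s * (L : ℝ) ^ (1 - p) ≤
      ∑ a ∈ s, ∑ t ∈ range L, |f (P a t) - f (P a (t + 1))| ^ p := by
    rw [← nsmul_eq_mul, ← sum_const]
    exact sum_le_sum fun a ha =>
      rpow_one_sub_le_sum_abs_sub_rpow hp hL (fun t => f (P a t)) (hend a ha)
  rw [← sum_product' (f := fun a t => |f (P a t) - f (P a (t + 1))| ^ p)] at hpaths
  linarith

def subsetIndicator (B S : Set (Pt d)) : ℝ := if S ⊆ B then 1 else 0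

theorem energy_subsetIndicator_le {n : ℕ} {p : ℝ} (hp : 0 < p) (B : Set (Pt d)) :
    energy d n p (subsetIndicator B) ≤
      #{z ∈ cubesF d n ×ˢ cubesF d n | (z.1 ∩ z.2).Nonempty ∧ z.1 ⊆ B ∧ ¬z.2 ⊆ B} := by
  set Y := {z ∈ cubesF d n ×ˢ cubesF d n | (z.1 ∩ z.2).Nonempty ∧ z.1 ⊆ B ∧ ¬z.2 ⊆ B}
  have hterm : ∀ z ∈ cubesF d n ×ˢ cubesF d n,
      (if (z.1 ∩ z.2).Nonempty then
        |subsetIndicator B z.1 - subsetIndicator B z.2| ^ p else 0) ≤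
      (if z ∈ Y then 1 else 0) + (if z.swap ∈ Y then 1 else 0) := by
    intro z hz
    have hz' : z.swap ∈ cubesF d n ×ˢ cubesF d n := by simpa [and_comm] using hz
    simp only [Y, mem_filter, hz, hz', true_and, Prod.fst_swap, Prod.snd_swap, inter_comm z.2,
      subsetIndicator]
    split_ifs <;> simp_all [Real.zero_rpow hp.ne']
  have hswap : ∑ z ∈ cubesF d n ×ˢ cubesF d n, (if z.swap ∈ Y then (1 : ℝ) else 0) =
      ∑ z ∈ cubesF d n ×ˢ cubesF d n, (if z ∈ Y then (1 : ℝ) else 0) := by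
    conv_rhs => rw [← map_swap_product, sum_map]
    rfl
  rw [energy_eq_sum]
  calc _ ≤ 1 / 2 * ∑ z ∈ cubesF d n ×ˢ cubesF d n,
        ((if z ∈ Y then (1 : ℝ) else 0) + (if z.swap ∈ Y then 1 else 0)) := by
        gcongr with z hz; exact hterm z hz
    _ = #Y := by
        rw [sum_add_distrib, hswap, sum_boole, filter_mem_eq_inter,
          Finset.inter_eq_right.2 (filter_subset _ _)]
        ring

def Admissible (d n m : ℕ) (A₁ A₂ : Set (Set (Pt d))) (f : Set (Pt d) → ℝ) : Prop :=
  (∀ Q ∈ Sm d n m A₁, f Q = 1) ∧ ∀ Q ∈ Sm d n m A₂, f Q = 0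

variable {n m : ℕ} {p : ℝ} {A₁ A₂ : Set (Set (Pt d))}

theorem conduct_le_energy {f : Set (Pt d) → ℝ} (hf : Admissible d n m A₁ A₂ f) :
    conduct d n m p A₁ A₂ ≤ energy d (n + m) p f :=
  csInf_le ⟨0, by rintro _ ⟨g, -, -, rfl⟩; exact energy_nonneg _ p g⟩ ⟨f, hf.1, hf.2, rfl⟩

theorem le_conduct {c : ℝ} (hne : ∃ f, Admissible d n m A₁ A₂ f)
    (h : ∀ f, Admissible d n m A₁ A₂ f → c ≤ energy d (n + m) p f) :
    c ≤ conduct d n m p A₁ A₂ := by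
  obtain ⟨f, hf⟩ := hne
  refine le_csInf ⟨_, f, hf.1, hf.2, rfl⟩ ?_
  rintro _ ⟨g, hg₁, hg₀, rfl⟩
  exact h g ⟨hg₁, hg₀⟩

theorem admissible_subsetIndicator (B : Set (Pt d)) :
    Admissible d n m {B} (GamC d n B) (subsetIndicator B) := by
  constructor
  · rintro Q ⟨-, _, rfl, hQ⟩
    exact if_pos hQ
  · rintro Q ⟨⟨-, x, hx, -⟩, Q', ⟨hQ', hnot⟩, hQQ'⟩
    refine if_neg fun hQB => hnot ⟨hQ', x, hQQ' (interior_subset hx), hQB (interior_subset hx)⟩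

end Energy

section Fractal

variable {d : ℕ}

/-- The open level-1 subcube of index `e + 1` is one of those removed from `[0,1]^d` in `F₁⁽ᵈ⁾`. -/
def IsHole (e : Fin d → ℕ) : Prop := ∃ i, (e i = 1 ∨ e i = 3) ∧ ∀ j, j ≠ i → e j = 2

def HoleFree (N : ℕ) (l : Fin d → ℕ) : Prop := ∀ k < N, ¬IsHole fun i => (l i - 1) / 5 ^ k % 5

theorem not_isHole_one (hd : 2 ≤ d) : ¬IsHole fun _ : Fin d => 1 := by
  rintro ⟨i, -, h⟩
  obtain ⟨j, hj⟩ : ∃ j : Fin d, j ≠ i :=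
    Fintype.exists_ne_of_one_lt_card (by simp; omega) i
  exact absurd (h j hj) (by norm_num)

theorem mem_Ioo_div_five_iff {x : ℝ} {e : ℕ} (hx : x ∈ Ioo (e / 5 : ℝ) ((e + 1) / 5)) (c : ℕ) :
    x ∈ Ioo (c / 5 : ℝ) ((c + 1) / 5) ↔ e = c := by
  refine ⟨fun hc => ?_, fun h => h ▸ hx⟩
  have h₁ : c < e + 1 := by exact_mod_cast (by linarith [hc.1, hx.2] : (c : ℝ) < e + 1)
  have h₂ : e < c + 1 := by exact_mod_cast (by linarith [hc.2, hx.1] : (e : ℝ) < c + 1)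
  omega

theorem mem_F1_iff {e : Fin d → ℕ} {x : Pt d} (hx : x ∈ openBox d 1 fun i => e i + 1) :
    x ∈ F1 d ↔ x ∈ F0 d ∧ ¬IsHole e := by
  have hx' : ∀ i, x i ∈ Ioo ((e i : ℝ) / 5) ((e i + 1) / 5) := fun i => by simpa using hx i
  have hdigit : ∀ i (c : ℕ), x i ∈ Ioo ((c : ℝ) / 5) ((c + 1) / 5) ↔ e i = c :=
    fun i => mem_Ioo_div_five_iff (hx' i)
  have h₂ : ∀ i, x i ∈ Ioo (2 / 5 : ℝ) (3 / 5) ↔ e i = 2 := fun i => by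
    simpa [show (2 : ℝ) + 1 = 3 by norm_num] using hdigit i 2
  have h₁₃ : ∀ i, x i ∈ Ioo (1 / 5 : ℝ) (2 / 5) ∪ Ioo (3 / 5) (4 / 5) ↔ e i = 1 ∨ e i = 3 :=
    fun i => by
      rw [mem_union, ← hdigit i 1, ← hdigit i 3]
      norm_num
  simp only [F1, Set.mem_sdiff, mem_iUnion, mem_ofPred_eq, h₂, h₁₃, IsHole]
  refine and_congr_right fun _ => not_congr (exists_congr fun i => ?_)
  constructor
  · rintro ⟨hlt, hi, hgt⟩
    exact ⟨hi, fun j hj => hj.lt_or_gt.elim (hlt j) (hgt j)⟩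
  · rintro ⟨hi, h⟩
    exact ⟨fun j hj => h j hj.ne, hi, fun j hj => h j hj.ne'⟩

theorem Fset_subset_F1 : Fset d ⊆ F1 d := fun _ hx => mem_iInter.1 hx 1

theorem cube_notMem_QcolOf_of_subset_hole {N : ℕ} {l e : Fin d → ℕ} (he : IsHole e)
    (h : cube d N l ⊆ cube d 1 fun i => e i + 1) : cube d N l ∉ QcolOf d N (Fset d) := by
  rintro ⟨-, x, hx, hxF⟩
  have hx' : x ∈ openBox d 1 fun i => e i + 1 := interior_cube (d := d) 1 _ ▸ interior_mono h hx
  exact ((mem_F1_iff hx').1 (Fset_subset_F1 hxF)).2 he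

theorem psi_mem_openBox {e : Fin d → ℕ} {y : Pt d} (hy : ∀ i, y i ∈ Ioo (0 : ℝ) 1) :
    psi d 1 (fun i => e i + 1) y ∈ openBox d 1 fun i => e i + 1 := fun i => by
  have := hy i
  simp only [psi, PiLp.toLp_apply, mem_Ioo] at this ⊢
  push_cast
  constructor <;> linarith

theorem psi_mem_F1 {e : Fin d → ℕ} (he : ∀ i, e i < 5) (hhole : ¬IsHole e) {y : Pt d}
    (hy : ∀ i, y i ∈ Ioo (0 : ℝ) 1) : psi d 1 (fun i => e i + 1) y ∈ F1 d := by
  refine (mem_F1_iff (psi_mem_openBox hy)).2 ⟨fun i => ?_, hhole⟩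
  have h₁ := hy i
  have h₂ : (e i : ℝ) ≤ 4 := by exact_mod_cast Nat.lt_succ_iff.1 (he i)
  simp only [psi, PiLp.toLp_apply, mem_Ioo, mem_Icc] at h₁ ⊢
  push_cast
  constructor <;> nlinarith

theorem cube_mem_QcolOf_F1 {e : Fin d → ℕ} (he : ∀ i, e i < 5) (hhole : ¬IsHole e) :
    cube d 1 (fun i => e i + 1) ∈ QcolOf d 1 (F1 d) := by
  have hy : ∀ i, pt d 0 (fun _ => 1) i ∈ Ioo (0 : ℝ) 1 := fun i => by norm_num [pt]
  refine ⟨⟨_, fun i => ⟨by omega, by have := he i; simp; omega⟩, rfl⟩, _, ?_,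
    psi_mem_F1 he hhole hy⟩
  rw [interior_cube]
  exact psi_mem_openBox hy

theorem pt_mem_unit {N : ℕ} {l : Fin d → ℕ} (hl : ∀ i, 1 ≤ l i ∧ l i ≤ 5 ^ N) (i : Fin d) :
    pt d N l i ∈ Ioo (0 : ℝ) 1 := by
  have h₁ : (1 : ℝ) ≤ l i := by exact_mod_cast (hl i).1
  have h₂ : (l i : ℝ) ≤ 5 ^ N := by exact_mod_cast (hl i).2
  simp only [pt, PiLp.toLp_apply, mem_Ioo]
  constructor
  · apply div_pos <;> [linarith; positivity]
  · rw [div_lt_one (by positivity)]; linarith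

theorem psi_pt (M : ℕ) (e l : Fin d → ℕ) :
    psi d 1 (fun i => e i + 1) (pt d M l) = pt d (M + 1) fun i => e i * 5 ^ M + l i := by
  ext i
  simp only [psi, pt, PiLp.toLp_apply]
  push_cast
  field_simp
  ring

theorem digit_mod_pow {k M : ℕ} (a : ℕ) (hk : k < M) : a % 5 ^ M / 5 ^ k % 5 = a / 5 ^ k % 5 := by
  rw [show 5 ^ M = 5 ^ k * 5 ^ (M - k) by rw [← pow_add]; congr 1; omega,
    Nat.mod_mul_right_div_self, Nat.mod_mod_of_dvd _ (dvd_pow_self 5 (by omega))]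

theorem exists_pt_eq_psi (hd : 2 ≤ d) {N : ℕ} {l : Fin d → ℕ}
    (hl : ∀ i, 1 ≤ l i ∧ l i ≤ 5 ^ N) (hfree : HoleFree N l) :
    ∃ e : Fin d → ℕ, (∀ i, e i < 5) ∧ ¬IsHole e ∧ ∃ M, ∃ l' : Fin d → ℕ,
      (∀ i, 1 ≤ l' i ∧ l' i ≤ 5 ^ M) ∧ HoleFree M l' ∧
      pt d N l = psi d 1 (fun i => e i + 1) (pt d M l') := by
  cases N with
  | zero =>
    refine ⟨fun _ => 1, fun _ => by norm_num, not_isHole_one hd, 0, l, hl, hfree, ?_⟩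
    have hl1 : ∀ i, l i = 1 := fun i => by have := hl i; simp at this; omega
    ext i
    simp only [psi, pt, PiLp.toLp_apply, hl1]
    norm_num
  | succ M =>
    have hdigit : ∀ i, (l i - 1) / 5 ^ M < 5 := fun i => by
      rw [Nat.div_lt_iff_lt_mul (by positivity), ← pow_succ']
      have := hl i
      omega
    refine ⟨fun i => (l i - 1) / 5 ^ M, hdigit, ?_, M, fun i => (l i - 1) % 5 ^ M + 1,
      fun i => ⟨Nat.le_add_left 1 _, Nat.mod_lt _ (by positivity)⟩, fun k hk => ?_, ?_⟩
    · convert hfree M M.lt_succ_self using 3 with i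
      exact (Nat.mod_eq_of_lt (hdigit i)).symm
    · simpa only [Nat.add_sub_cancel, digit_mod_pow _ hk] using hfree k (by omega)
    · rw [psi_pt]
      congr 1
      funext i
      have := Nat.div_add_mod' (l i - 1) (5 ^ M)
      have := (hl i).1
      omega

theorem pt_mem_Fn (hd : 2 ≤ d) (n : ℕ) :
    ∀ {N : ℕ} {l : Fin d → ℕ}, (∀ i, 1 ≤ l i ∧ l i ≤ 5 ^ N) → HoleFree N l →
      pt d N l ∈ Fn d (n + 1) := by
  induction n with
  | zero =>
    intro N l hl hfree
    obtain ⟨e, he, hhole, M, l', hl', -, heq⟩ := exists_pt_eq_psi hd hl hfree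
    rw [heq]
    exact psi_mem_F1 he hhole (pt_mem_unit hl')
  | succ n ih =>
    intro N l hl hfree
    obtain ⟨e, he, hhole, M, l', hl', hfree', heq⟩ := exists_pt_eq_psi hd hl hfree
    rw [heq]
    exact mem_biUnion (x := fun i => e i + 1) (cube_mem_QcolOf_F1 he hhole)
      ⟨_, ih hl' hfree', rfl⟩

theorem cube_mem_QcolOf (hd : 2 ≤ d) {N : ℕ} {l : Fin d → ℕ}
    (hl : ∀ i, 1 ≤ l i ∧ l i ≤ 5 ^ N) (hfree : HoleFree N l) :
    cube d N l ∈ QcolOf d N (Fset d) := by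
  refine ⟨⟨l, hl, rfl⟩, pt d N l, interior_cube (d := d) N l ▸ pt_mem_openBox N l,
    mem_iInter.2 fun n => ?_⟩
  cases n with
  | zero => exact fun i => Ioo_subset_Icc_self (pt_mem_unit hl i)
  | succ n => exact pt_mem_Fn hd n hl hfree

end Fractal

section Digits

open Finset

def avoidTwo : ℕ → Finset ℕ
  | 0 => {0}
  | m + 1 => (avoidTwo m).biUnion fun u => {5 * u, 5 * u + 1, 5 * u + 3, 5 * u + 4}

theorem lt_of_mem_avoidTwo : ∀ {m u : ℕ}, u ∈ avoidTwo m → u < 5 ^ m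
  | 0, u, hu => by simp_all [avoidTwo]
  | m + 1, u, hu => by
    simp only [avoidTwo, Finset.mem_biUnion, Finset.mem_insert, Finset.mem_singleton] at hu
    obtain ⟨v, hv, hu⟩ := hu
    have := lt_of_mem_avoidTwo hv
    rw [pow_succ]
    omega

theorem digit_ne_two_of_mem_avoidTwo : ∀ {m u : ℕ}, u ∈ avoidTwo m → ∀ k, u / 5 ^ k % 5 ≠ 2
  | 0, u, hu, k => by simp_all [avoidTwo]
  | m + 1, u, hu, k => by
    simp only [avoidTwo, Finset.mem_biUnion, Finset.mem_insert, Finset.mem_singleton] at hu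
    obtain ⟨v, hv, hu⟩ := hu
    cases k with
    | zero => simp only [pow_zero, Nat.div_one]; omega
    | succ k =>
      rw [pow_succ', ← Nat.div_div_eq_div_mul, show u / 5 = v by omega]
      exact digit_ne_two_of_mem_avoidTwo hv k

theorem card_avoidTwo : ∀ m, #(avoidTwo m) = 4 ^ m
  | 0 => rfl
  | m + 1 => by
    rw [avoidTwo, card_biUnion, sum_congr rfl fun u _ => ?_, sum_const, card_avoidTwo m,
      smul_eq_mul, pow_succ]
    · rw [card_insert_of_notMem (by simp), card_insert_of_notMem (by simp), card_pair (by omega)]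
    · intro a _ b _ hab
      simp only [Function.onFun, Finset.disjoint_left]
      intro x hxa hxb
      simp only [Finset.mem_insert, Finset.mem_singleton] at hxa hxb
      omega

theorem digit_two_mul_five_pow (m k : ℕ) :
    2 * 5 ^ m / 5 ^ k % 5 = 0 ∨ 2 * 5 ^ m / 5 ^ k % 5 = 2 := by
  rcases lt_trichotomy k m with hk | rfl | hk
  · left
    rw [show m = k + (m - k - 1) + 1 by omega, pow_succ, pow_add, ← mul_assoc, mul_comm 2,
      mul_assoc, mul_assoc, Nat.mul_div_cancel_left _ (by positivity)]
    omega
  · simp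
  · left
    have : 0 < 5 ^ m := by positivity
    rw [Nat.div_eq_of_lt]
    calc 2 * 5 ^ m < 5 ^ (m + 1) := by rw [pow_succ]; omega
      _ ≤ 5 ^ k := Nat.pow_le_pow_right (by norm_num) hk

theorem holeFree_column {N u v : ℕ} (hu : ∀ k, u / 5 ^ k % 5 ≠ 2) (hv : ∀ k, v / 5 ^ k % 5 ≠ 2)
    (s : ℕ) : HoleFree N ![u + 1, v + 1, s] := by
  rintro k - ⟨i, -, h⟩
  fin_cases i
  · exact hv k (by simpa using h 1 (by decide))
  · exact hu k (by simpa using h 0 (by decide))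
  · exact hu k (by simpa using h 0 (by decide))

theorem holeFree_diagonal {N c : ℕ} (hc : ∀ k, (c - 1) / 5 ^ k % 5 = 0 ∨ (c - 1) / 5 ^ k % 5 = 2)
    (a : ℕ) : HoleFree N ![a, a, c] := by
  rintro k - ⟨i, hi, h⟩
  fin_cases i
  · have := h 1 (by decide); simp_all
  · have := h 0 (by decide); simp_all
  · have := hc k; simp at hi; omega

end Digits

section Conductances

open Finset

/-- `[0, 1/5]² × [2/5, 3/5]`, the level-1 cube in the middle of a vertical edge of `[0,1]³`. -/
def Qmid : Set (Pt 3) := cube 3 1 ![1, 1, 3]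

theorem Qmid_mem_QcolOf : Qmid ∈ QcolOf 3 1 (Fset 3) :=
  cube_mem_QcolOf (by norm_num) (fun i => by fin_cases i <;> simp)
    (holeFree_column (u := 0) (v := 0) (by simp) (by simp) 3)

theorem Qmid_mem_GamC_Qone : Qmid ∈ GamC 3 1 (Qone 3) := by
  refine ⟨Qmid_mem_QcolOf, fun h => ?_⟩
  have := (cube_inter_nonempty_iff.1 (Qone_eq_cube (d := 3) ▸ h.2)) 2
  simp at this

theorem Qmid_mem_GamC_Qtwo : Qmid ∈ GamC 3 1 (Qtwo 3) := by
  refine ⟨Qmid_mem_QcolOf, fun h => ?_⟩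
  have := (cube_inter_nonempty_iff.1 (Qtwo_eq_cube (d := 3) ▸ h.2)) 0
  simp at this

theorem column_mem_QcolOf {m u v t : ℕ} (hu : u ∈ avoidTwo m) (hv : v ∈ avoidTwo m)
    (ht : t < 3 * 5 ^ m) : cube 3 (1 + m) ![u + 1, v + 1, t + 1] ∈ QcolOf 3 (1 + m) (Fset 3) := by
  have := lt_of_mem_avoidTwo hu
  have := lt_of_mem_avoidTwo hv
  refine cube_mem_QcolOf (by norm_num) (fun i => ?_) (holeFree_column
    (digit_ne_two_of_mem_avoidTwo hu) (digit_ne_two_of_mem_avoidTwo hv) _)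
  rw [pow_add]
  fin_cases i <;> simp <;> omega

theorem diagonal_mem_QcolOf {m t : ℕ} (ht : t ≤ 5 ^ m + 1) :
    cube 3 (1 + m) ![5 ^ m + t, 5 ^ m + t, 2 * 5 ^ m + 1] ∈ QcolOf 3 (1 + m) (Fset 3) := by
  have : 0 < 5 ^ m := by positivity
  refine cube_mem_QcolOf (by norm_num) (fun i => ?_)
    (holeFree_diagonal (fun k => by simpa using digit_two_mul_five_pow m k) _)
  rw [pow_add]
  fin_cases i <;> simp <;> omega

theorem le_conduct_Qone {p : ℝ} (hp : 1 ≤ p) (m : ℕ) :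
    16 ^ m * (3 * 5 ^ m : ℝ) ^ (1 - p) / 2 ≤ conduct 3 1 m p {Qone 3} (GamC 3 1 (Qone 3)) := by
  have h5 : 0 < 5 ^ m := by positivity
  set L := 3 * 5 ^ m - 1
  set s := avoidTwo m ×ˢ avoidTwo m
  set P : ℕ × ℕ → ℕ → Set (Pt 3) := fun uv t => cube 3 (1 + m) ![uv.1 + 1, uv.2 + 1, t + 1]
  have hs : ∀ uv ∈ s, uv.1 < 5 ^ m ∧ uv.2 < 5 ^ m := fun uv huv =>
    ⟨lt_of_mem_avoidTwo (mem_product.1 huv).1, lt_of_mem_avoidTwo (mem_product.1 huv).2⟩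
  have hmem : ∀ uv ∈ s, ∀ t ≤ L, P uv t ∈ QcolOf 3 (1 + m) (Fset 3) := fun uv huv t ht =>
    column_mem_QcolOf (mem_product.1 huv).1 (mem_product.1 huv).2 (by omega)
  refine le_conduct ⟨_, admissible_subsetIndicator _⟩ fun f hf => ?_
  have hends : ∀ uv ∈ s, 1 ≤ |f (P uv 0) - f (P uv L)| := fun uv huv => by
    have := hs uv huv
    have hbot : P uv 0 ⊆ Qone 3 := by
      rw [Qone_eq_cube]
      exact cube_subset_cube_iff.2 fun i => by fin_cases i <;> simp <;> omega
    have htop : P uv L ⊆ Qmid := cube_subset_cube_iff.2 fun i => by fin_cases i <;> simp <;> omega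
    rw [hf.1 _ ⟨hmem uv huv 0 (Nat.zero_le _), _, rfl, hbot⟩,
      hf.2 _ ⟨hmem uv huv L le_rfl, _, Qmid_mem_GamC_Qone, htop⟩]
    norm_num
  have hpaths := card_mul_rpow_div_two_le_energy hp f (s := s) (L := L) (by omega) P hmem
    (fun uv _ t _ => cube_inter_nonempty_iff.2 fun i => by fin_cases i <;> simp)
    (fun uv _ uv' _ t _ t' _ h => by
      have := cube_injective _ h
      have h₀ := congrFun this 0; have h₁ := congrFun this 1; have h₂ := congrFun this 2
      simp at h₀ h₁ h₂
      exact ⟨Prod.ext h₀ h₁, h₂⟩)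
    hends
  have h16 : ((#s : ℕ) : ℝ) = 16 ^ m := by
    rw [card_product, card_avoidTwo]; push_cast; rw [← mul_pow]; norm_num
  have hrpow : (3 * 5 ^ m : ℝ) ^ (1 - p) ≤ (L : ℝ) ^ (1 - p) := by
    have : (1 : ℝ) ≤ 5 ^ m := one_le_pow₀ (by norm_num)
    rw [Nat.cast_sub (by omega)]
    push_cast
    exact Real.rpow_le_rpow_of_nonpos (by linarith) (by linarith) (by linarith)
  rw [h16] at hpaths
  linarith [mul_le_mul_of_nonneg_left hrpow (by positivity : (0 : ℝ) ≤ 16 ^ m)]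

theorem conduct_Qtwo_pos {p : ℝ} (hp : 1 ≤ p) (m : ℕ) :
    0 < conduct 3 1 m p {Qtwo 3} (GamC 3 1 (Qtwo 3)) := by
  have h5 : 0 < 5 ^ m := by positivity
  set L := 5 ^ m + 1
  set P : Unit → ℕ → Set (Pt 3) := fun _ t => cube 3 (1 + m) ![5 ^ m + t, 5 ^ m + t, 2 * 5 ^ m + 1]
  have hmem : ∀ a ∈ (univ : Finset Unit), ∀ t ≤ L, P a t ∈ QcolOf 3 (1 + m) (Fset 3) :=
    fun _ _ _ ht => diagonal_mem_QcolOf ht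
  refine lt_of_lt_of_le ?_ (le_conduct ⟨_, admissible_subsetIndicator _⟩ fun f hf =>
    card_mul_rpow_div_two_le_energy hp f (s := univ) (L := L) (by omega) P hmem
      (fun _ _ t _ => cube_inter_nonempty_iff.2 fun i => by fin_cases i <;> dsimp <;> omega)
      (fun _ _ _ _ t _ t' _ h => ⟨rfl, by simpa using congrFun (cube_injective _ h) 0⟩)
      (fun _ _ => ?_))
  · simp only [card_univ, Fintype.card_unit, Nat.cast_one, one_mul]
    positivity
  · have hbot : P () 0 ⊆ Qmid :=
      cube_subset_cube_iff.2 fun i => by fin_cases i <;> dsimp <;> omega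
    have htop : P () L ⊆ Qtwo 3 := by
      rw [Qtwo_eq_cube]
      exact cube_subset_cube_iff.2 fun i => by fin_cases i <;> simp <;> omega
    rw [hf.1 _ ⟨hmem () (mem_univ _) L le_rfl, _, rfl, htop⟩,
      hf.2 _ ⟨hmem () (mem_univ _) 0 (Nat.zero_le _), _, Qmid_mem_GamC_Qtwo, hbot⟩]
    norm_num

end Conductances

section UpperBound

open Finset

/-- The indices, at level `1 + m`, of the cubes along the edges of the layer of cubes
surrounding `Q₂`. -/
def edgeLayer (m : ℕ) : Finset (Fin 3 → ℕ) :=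
  univ.biUnion fun k => Fintype.piFinset fun t =>
    if t = k then Icc (2 * 5 ^ m) (3 * 5 ^ m + 1) else {2 * 5 ^ m, 3 * 5 ^ m + 1}

theorem card_edgeLayer_le (m : ℕ) : #(edgeLayer m) ≤ 12 * (5 ^ m + 2) := by
  refine card_biUnion_le.trans ?_
  have hpair : #({2 * 5 ^ m, 3 * 5 ^ m + 1} : Finset ℕ) = 2 := card_pair (by omega)
  simp only [Fintype.card_piFinset, Fin.prod_univ_three, Fin.sum_univ_three, apply_ite card,
    Nat.card_Icc, hpair]
  simp
  omega

theorem exists_forall_ne_fin_three :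
    ∀ i j : Fin 3, i ≠ j → ∃ k, ∀ t, t ≠ k → t = i ∨ t = j := by
  decide

theorem cube_notMem_QcolOf_of_face {m : ℕ} {l : Fin 3 → ℕ} (i : Fin 3)
    (hi : l i = 2 * 5 ^ m ∨ l i = 3 * 5 ^ m + 1)
    (hother : ∀ j, j ≠ i → 2 * 5 ^ m < l j ∧ l j ≤ 3 * 5 ^ m) :
    cube 3 (1 + m) l ∉ QcolOf 3 (1 + m) (Fset 3) := by
  have h5 : 0 < 5 ^ m := by positivity
  refine cube_notMem_QcolOf_of_subset_hole
    (e := fun j => if j = i then (if l i = 2 * 5 ^ m then 1 else 3) else 2)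
    ⟨i, by simp only; split_ifs <;> simp, fun j hj => by simp [hj]⟩
    (cube_subset_cube_iff.2 fun j => ?_)
  by_cases hj : j = i
  · subst hj
    simp only
    split_ifs <;> omega
  · simp only [hj, if_false]
    have := hother j hj
    omega

theorem mem_edgeLayer_of_crossing {m : ℕ} {Q Q' : Set (Pt 3)} (hQ : Q ∈ Qcol 3 (1 + m))
    (hQ' : Q' ∈ QcolOf 3 (1 + m) (Fset 3)) (htouch : (Q ∩ Q').Nonempty) (hin : Q ⊆ Qtwo 3)
    (hout : ¬Q' ⊆ Qtwo 3) : ∃ l ∈ edgeLayer m, Q' = cube 3 (1 + m) l := by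
  obtain ⟨l, -, rfl⟩ := hQ
  obtain ⟨l', -, rfl⟩ := hQ'.1
  rw [Qtwo_eq_cube] at hin hout
  have hin' := cube_subset_cube_iff.1 hin
  have hclose := cube_inter_nonempty_iff.1 htouch
  have hrange : ∀ t, 2 * 5 ^ m ≤ l' t ∧ l' t ≤ 3 * 5 ^ m + 1 := fun t => by
    have := hin' t; have := hclose t; omega
  obtain ⟨i, hi⟩ : ∃ i, l' i = 2 * 5 ^ m ∨ l' i = 3 * 5 ^ m + 1 := by
    by_contra! h
    exact hout (cube_subset_cube_iff.2 fun t => by have := hrange t; have := h t; omega)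
  obtain ⟨j, hji, hj⟩ : ∃ j, j ≠ i ∧ (l' j = 2 * 5 ^ m ∨ l' j = 3 * 5 ^ m + 1) := by
    by_contra! h
    exact cube_notMem_QcolOf_of_face i hi
      (fun t ht => by have := hrange t; have := h t ht; omega) hQ'
  obtain ⟨k, hk⟩ := exists_forall_ne_fin_three j i hji
  refine ⟨l', mem_biUnion.2 ⟨k, mem_univ _, Fintype.mem_piFinset.2 fun t => ?_⟩, rfl⟩
  split_ifs with htk
  · exact mem_Icc.2 (hrange t)
  · rcases hk t htk with rfl | rfl <;> simpa using ‹_›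

theorem conduct_Qtwo_le {p : ℝ} (hp : 0 < p) (m : ℕ) :
    conduct 3 1 m p {Qtwo 3} (GamC 3 1 (Qtwo 3)) ≤ 972 * 5 ^ m := by
  refine (conduct_le_energy (admissible_subsetIndicator _)).trans
    ((energy_subsetIndicator_le hp _).trans ?_)
  have hY := card_le_three_pow_mul_card (S := edgeLayer m)
    (Y := {z ∈ cubesF 3 (1 + m) ×ˢ cubesF 3 (1 + m) |
      (z.1 ∩ z.2).Nonempty ∧ z.1 ⊆ Qtwo 3 ∧ ¬z.2 ⊆ Qtwo 3}) fun z hz => by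
    simp only [mem_filter, mem_product, Set.Finite.mem_toFinset] at hz
    exact ⟨hz.1.1.1, hz.2.1,
      mem_edgeLayer_of_crossing hz.1.1.1 hz.1.2 hz.2.1 hz.2.2.1 hz.2.2.2⟩
  have := card_edgeLayer_le m
  have h5 : 1 ≤ 5 ^ m := Nat.one_le_pow _ _ (by norm_num)
  exact_mod_cast (by omega : #_ ≤ 972 * 5 ^ m)

end UpperBound

end SierpinskiCarpet

open Filter in
/-- For `1 < p < log 16 / log 5`, the ratio of the conductances of the corner cube and the
center cube of `F⁽³⁾` tends to infinity. -/
theorem statement7 (p : ℝ) (hp1 : 1 < p) (hp2 : p < Real.log 16 / Real.log 5) :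
    Tendsto (fun m : ℕ =>
      conduct 3 1 m p {Qone 3} (GamC 3 1 (Qone 3)) /
        conduct 3 1 m p {Qtwo 3} (GamC 3 1 (Qtwo 3))) atTop atTop := by
  have h5p : (5 : ℝ) ^ p < 16 := (Real.lt_logb_iff_rpow_lt (by norm_num) (by norm_num)).1 hp2
  have hr : 1 < 16 / (5 : ℝ) ^ p := (one_lt_div (by positivity)).2 h5p
  have hc : (0 : ℝ) < 3 ^ (1 - p) / 1944 := by positivity
  refine tendsto_atTop_mono (fun m => ?_)
    ((tendsto_pow_atTop_atTop_of_one_lt hr).const_mul_atTop hc)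
  rw [le_div_iff₀ (SierpinskiCarpet.conduct_Qtwo_pos hp1.le m)]
  have h5m : (0 : ℝ) < 5 ^ m := by positivity
  calc 3 ^ (1 - p) / 1944 * (16 / (5 : ℝ) ^ p) ^ m * conduct 3 1 m p {Qtwo 3} (GamC 3 1 (Qtwo 3))
      ≤ 3 ^ (1 - p) / 1944 * (16 / (5 : ℝ) ^ p) ^ m * (972 * 5 ^ m) := by
        gcongr; exact SierpinskiCarpet.conduct_Qtwo_le (by linarith) m
    _ = 16 ^ m * (3 * 5 ^ m : ℝ) ^ (1 - p) / 2 := by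
        rw [Real.mul_rpow (by norm_num) h5m.le, Real.rpow_sub h5m, Real.rpow_one,
          ← Real.rpow_pow_comm (by norm_num), div_pow]
        field_simp
        ring
    _ ≤ conduct 3 1 m p {Qone 3} (GamC 3 1 (Qone 3)) := SierpinskiCarpet.le_conduct_Qone hp1.le m
end

section
/- The product set [0,1] × G^(1) is contained in F^(2), where G^(1) ⊆ [0,1] is the boundary Cantor-type set of the one-dimensional construction. -/
open Set MeasureTheory Filter
open scoped Classical

/-! By induction on `n`, `[0,1] × Gₙ₊₁⁽¹⁾ ⊆ Fₙ₊₁⁽²⁾`. For `n = 0` this holds because the cross removed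
from `[0,1]²` to form `F₁⁽²⁾` misses the strips `[0,1] × [0,1/5]` and `[0,1] × [4/5,1]`, which make up
`[0,1] × G₁⁽¹⁾`. For the step, a point of `[0,1] × Gₙ₊₂⁽¹⁾` lies in a level-one square whose row is
the bottom or top one (where `Gₙ₊₂⁽¹⁾` is `Gₙ₊₁⁽¹⁾` rescaled) and whose column is arbitrary; every such
square belongs to `𝒬₁⁽²⁾(F₁⁽²⁾)`, and blowing the square up to `[0,1]²` carries the point into
`[0,1] × Gₙ₊₁⁽¹⁾`. -/

section PiLpBoxes

variable {ι : Type*} (p : ENNReal) {β : ι → Type*} [∀ i, TopologicalSpace (β i)]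

lemma PiLp.interior_setOf_forall_mem [Finite ι] (s : ∀ i, Set (β i)) :
    interior {x : PiLp p β | ∀ i, x i ∈ s i} = {x | ∀ i, x i ∈ interior (s i)} := by
  have h : {x : PiLp p β | ∀ i, x i ∈ s i} = PiLp.homeomorph p β ⁻¹' univ.pi s := by
    ext; simp [PiLp.homeomorph]
  rw [h, ← Homeomorph.preimage_interior, interior_pi_set finite_univ]
  ext; simp [PiLp.homeomorph]

lemma PiLp.closure_setOf_forall_mem (s : ∀ i, Set (β i)) :
    closure {x : PiLp p β | ∀ i, x i ∈ s i} = {x | ∀ i, x i ∈ closure (s i)} := by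
  have h : {x : PiLp p β | ∀ i, x i ∈ s i} = PiLp.homeomorph p β ⁻¹' univ.pi s := by
    ext; simp [PiLp.homeomorph]
  rw [h, ← Homeomorph.preimage_closure, closure_pi_set]
  ext; simp [PiLp.homeomorph]

end PiLpBoxes

@[simp]
lemma psi_apply {d n : ℕ} (l : Fin d → ℕ) (x : Pt d) (i : Fin d) :
    psi d n l x i = ((l i : ℝ) - 1) / 5 ^ n + x i / 5 ^ n := rfl

lemma mem_interior_cube {d n : ℕ} {l : Fin d → ℕ} {x : Pt d} :
    x ∈ interior (cube d n l) ↔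
      ∀ i, ((l i : ℝ) - 1) / 5 ^ n < x i ∧ x i < (l i : ℝ) / 5 ^ n := by
  have h := PiLp.interior_setOf_forall_mem 2
    (fun i : Fin d => Icc (((l i : ℝ) - 1) / 5 ^ n) ((l i : ℝ) / 5 ^ n))
  simp only [interior_Icc] at h
  exact Set.ext_iff.mp h x

lemma exists_coord_eq_of_mem_frontier_F0 {d : ℕ} {x : Pt d} (hx : x ∈ frontier (F0 d)) :
    ∃ i, x i = 0 ∨ x i = 1 := by
  rw [frontier, F0, PiLp.closure_setOf_forall_mem, PiLp.interior_setOf_forall_mem] at hx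
  simp only [closure_Icc, interior_Icc] at hx
  obtain ⟨hcl, hint⟩ := hx
  obtain ⟨i, hi⟩ := not_forall.mp hint
  refine ⟨i, ?_⟩
  rcases (hcl i).1.eq_or_lt with h | h
  · exact .inl h.symm
  rcases (hcl i).2.eq_or_lt with h' | h'
  · exact .inr h'
  exact absurd ⟨h, h'⟩ hi

lemma mem_of_mem_G1_one {z : Pt 1} (hz : z ∈ G1 1) :
    z 0 ∈ Icc (0 : ℝ) (1/5) ∪ Icc (4/5 : ℝ) 1 := by
  simp only [G1, mem_iUnion, exists_prop] at hz
  obtain ⟨Q, ⟨⟨⟨l, hl, rfl⟩, -⟩, ⟨w, hwQ, hwfr⟩⟩, hzQ⟩ := hz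
  obtain ⟨i, hw⟩ := exists_coord_eq_of_mem_frontier_F0 hwfr
  obtain rfl : i = 0 := Subsingleton.elim _ _
  have hw0 := hwQ 0
  have hz0 := hzQ 0
  norm_num at hw0 hz0
  rcases hw with h | h <;> rw [h] at hw0
  · have hl1 : l 0 = 1 := by
      have h₁ : (l 0 : ℝ) ≤ 1 := by linarith
      have h₂ := hl 0; norm_cast at h₁; omega
    rw [hl1] at hz0; norm_num at hz0
    exact .inl ⟨by linarith, by linarith⟩
  · have hl5 : l 0 = 5 := by
      have h₁ : (5 : ℝ) ≤ l 0 := by linarith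
      have h₂ := hl 0; norm_cast at h₁; omega
    rw [hl5] at hz0; norm_num at hz0
    exact .inr ⟨by linarith, by linarith⟩

lemma index_eq_of_cube_mem_QcolOf_G1 {l : Fin 1 → ℕ} (h : cube 1 1 l ∈ QcolOf 1 1 (G1 1)) :
    l 0 = 1 ∨ l 0 = 5 := by
  obtain ⟨-, z, hzQ, hzG⟩ := h
  have hz := mem_interior_cube.mp hzQ 0
  norm_num at hz
  rcases mem_of_mem_G1_one hzG with ⟨h0, h1⟩ | ⟨h0, h1⟩
  · have h₁ : (l 0 : ℝ) < 2 := by linarith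
    have h₂ : (0 : ℝ) < l 0 := by linarith
    norm_cast at h₁ h₂; omega
  · have h₁ : (4 : ℝ) < l 0 := by linarith
    have h₂ : (l 0 : ℝ) < 6 := by linarith
    norm_cast at h₁ h₂; omega

lemma mem_F1_two {x : Pt 2} (hx0 : x 0 ∈ Icc (0 : ℝ) 1)
    (hx1 : x 1 ∈ Icc (0 : ℝ) (1/5) ∪ Icc (4/5 : ℝ) 1) : x ∈ F1 2 := by
  refine ⟨fun i => ?_, fun hcross => ?_⟩
  · fin_cases i
    · exact hx0
    · change x 1 ∈ Icc (0 : ℝ) 1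
      rcases hx1 with h | h
      · exact ⟨h.1, by linarith [h.2]⟩
      · exact ⟨by linarith [h.1], h.2⟩
  simp only [mem_iUnion, mem_ofPred_eq, mem_union, mem_Ioo] at hcross
  obtain ⟨i, -, hi, hafter⟩ := hcross
  fin_cases i
  · have := hafter 1 (by decide)
    rcases hx1 with h | h <;> linarith [h.1, h.2]
  · change (1/5 < x 1 ∧ x 1 < 2/5) ∨ (3/5 < x 1 ∧ x 1 < 4/5) at hi
    rcases hi with h' | h' <;> rcases hx1 with h | h <;> linarith [h.1, h.2]

lemma cube_mem_QcolOf_F1_two {a b : ℕ} (ha : 1 ≤ a ∧ a ≤ 5) (hb : b = 1 ∨ b = 5) :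
    cube 2 1 ![a, b] ∈ QcolOf 2 1 (F1 2) := by
  have hb' : 1 ≤ b ∧ b ≤ 5 := by omega
  refine ⟨⟨![a, b], fun i => ?_, rfl⟩, ?_⟩
  · fin_cases i <;> simpa
  have ha' : (1 : ℝ) ≤ a ∧ (a : ℝ) ≤ 5 := by exact_mod_cast ha
  set c : Pt 2 := WithLp.toLp 2 ![(a - 1) / 5 + 1 / 10, (b - 1) / 5 + 1 / 10]
  refine ⟨c, mem_interior_cube.mpr fun i => ?_, mem_F1_two ?_ ?_⟩
  · fin_cases i <;> norm_num [c] <;> linarith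
  · simp only [c, Matrix.cons_val_zero, mem_Icc]
    constructor <;> linarith
  · simp only [c, Matrix.cons_val_one, Matrix.cons_val_zero]
    rcases hb with rfl | rfl <;> norm_num

lemma exists_index_mem_Icc {t : ℝ} (ht : t ∈ Icc (0 : ℝ) 1) :
    ∃ a : ℕ, (1 ≤ a ∧ a ≤ 5) ∧ t ∈ Icc (((a : ℝ) - 1) / 5) ((a : ℝ) / 5) := by
  refine ⟨max 1 ⌈5 * t⌉₊, ⟨le_max_left _ _, max_le (by norm_num) ?_⟩, ?_⟩
  · exact Nat.ceil_le.mpr (by push_cast; linarith [ht.2])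
  have hle := Nat.le_ceil (5 * t)
  have hlt := Nat.ceil_lt_add_one (show 0 ≤ 5 * t by linarith [ht.1])
  rcases le_total 1 ⌈5 * t⌉₊ with h | h
  · rw [max_eq_right h]; constructor <;> linarith
  · rw [max_eq_left h]
    have : (⌈5 * t⌉₊ : ℝ) ≤ 1 := by exact_mod_cast h
    push_cast; constructor <;> linarith [ht.1]

lemma mem_Fn_two_succ (n : ℕ) {x : Pt 2} (hx0 : x 0 ∈ Icc (0 : ℝ) 1)
    (hx1 : WithLp.toLp 2 (fun _ : Fin 1 => x 1) ∈ Gn 1 (n + 1)) : x ∈ Fn 2 (n + 1) := by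
  induction n generalizing x with
  | zero => exact mem_F1_two hx0 (mem_of_mem_G1_one hx1)
  | succ n ih =>
    simp only [Gn, mem_iUnion, exists_prop] at hx1
    obtain ⟨l, hl, y, hy, hxy⟩ := hx1
    have hy0 : x 1 = ((l 0 : ℝ) - 1) / 5 + y 0 / 5 := by
      simpa using (congrArg (· 0) hxy).symm
    obtain ⟨a, ha, hxa⟩ := exists_index_mem_Icc hx0
    simp only [Fn, mem_iUnion, exists_prop]
    refine ⟨![a, l 0], cube_mem_QcolOf_F1_two ha (index_eq_of_cube_mem_QcolOf_G1 hl),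
      WithLp.toLp 2 ![5 * x 0 - (a - 1), y 0], ih ?_ ?_, ?_⟩
    · simp only [Matrix.cons_val_zero, mem_Icc]
      constructor <;> linarith [hxa.1, hxa.2]
    · convert hy using 1
      ext i
      fin_cases i
      rfl
    · ext i
      fin_cases i
      · simp only [Fin.zero_eta, psi_apply, Matrix.cons_val_zero, pow_one]
        ring
      · simp [hy0]

/-- `[0,1] × G⁽¹⁾ ⊆ F⁽²⁾`. -/
theorem statement12 :
    {x : Pt 2 | x 0 ∈ Icc (0 : ℝ) 1 ∧ WithLp.toLp 2 (fun _ : Fin 1 => x 1) ∈ Gset 1} ⊆ Fset 2 := by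
  rintro x ⟨hx0, -, hG⟩
  simp only [mem_iInter] at hG
  simp only [Fset, mem_iInter]
  rintro (_ | n)
  · exact (mem_Fn_two_succ 0 hx0 (hG 1 le_rfl)).1
  · exact mem_Fn_two_succ n hx0 (hG (n + 1) n.succ_pos)
end

section
/- Let d = 3 and Q_1 = [0,1/5]^3 ∈ Q_1^(3)(F^(3)). Fix an integer m ≥ 1. For every square Q̃ ∈ Q_{m+1}^(2)(G^(2) ∩ [0,1/5]^2) and every i ∈ {0, 1, ..., 5^m + 1}, the box Q_{Q̃,i} := [(5^m − 1 + i)/5^{m+1}, (5^m + i)/5^{m+1}] × Q̃ belongs to Q_{m+1}^(3)(F^(3)); moreover Q_{Q̃,0} ∈ S^m({Q_1}) and Q_{Q̃,5^m+1} ∈ S^m(Γ(Q_1)^c). -/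
open Set MeasureTheory Filter
open scoped Classical

/-- The box `Q_{Q̃,i} = [(5^m-1+i)/5^{m+1}, (5^m+i)/5^{m+1}] × Q̃`. -/
def rect3 (m i : ℕ) (Qt : Set (Pt 2)) : Set (Pt 3) :=
  {x | x 0 ∈ Icc ((5 ^ m - 1 + i : ℝ) / 5 ^ (m + 1)) ((5 ^ m + i : ℝ) / 5 ^ (m + 1)) ∧
    (WithLp.toLp 2 (fun j : Fin 2 => x j.succ) : Pt 2) ∈ Qt}


/-! For every `x ∈ G⁽²⁾` the whole segment `[0,1] × {x}` lies in `F⁽³⁾`. At each level of the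
construction a point of `Gₙ⁽²⁾` lies in a square touching the frame of `[0,1]²`; every point of a
level-1 cube of `[0,1]³` above such a square has a coordinate in `[0,1/5] ∪ [4/5,1]`, so the cube
is kept in `F₁⁽³⁾`, and self-similarity carries this through all levels. Since `Q̃` meets `G⁽²⁾`
in its interior, every box `Q_{Q̃,i}` is then a cell of `F⁽³⁾`; comparing indices places the first
box inside `Q₁` and the last inside the cell `[2/5,3/5] × [0,1/5]²`, which misses `Q₁`. -/

namespace Pt

def cons {d : ℕ} (t : ℝ) (x : Pt d) : Pt (d + 1) := WithLp.toLp 2 (Fin.cons t x.ofLp)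

@[simp] lemma cons_zero {d : ℕ} (t : ℝ) (x : Pt d) : cons t x 0 = t := rfl

@[simp] lemma cons_succ {d : ℕ} (t : ℝ) (x : Pt d) (j : Fin d) : cons t x j.succ = x j := rfl

end Pt

section

variable {d : ℕ}

lemma interior_ofLp_preimage (s : Set (Fin d → ℝ)) :
    interior (WithLp.ofLp ⁻¹' s : Set (Pt d)) = WithLp.ofLp ⁻¹' interior s :=
  ((PiLp.homeomorph 2 fun _ : Fin d => ℝ).preimage_interior s).symm

lemma mem_interior_cube_iff {n : ℕ} {l : Fin d → ℕ} {x : Pt d} :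
    x ∈ interior (cube d n l) ↔ ∀ i, ((l i : ℝ) - 1) / 5 ^ n < x i ∧ x i < (l i : ℝ) / 5 ^ n := by
  have hcube : cube d n l =
      WithLp.ofLp ⁻¹' univ.pi fun i => Icc (((l i : ℝ) - 1) / 5 ^ n) ((l i : ℝ) / 5 ^ n) := by
    ext y; simp only [cube, mem_ofPred_eq, mem_preimage, mem_univ_pi, mem_Icc]
  rw [hcube, interior_ofLp_preimage, interior_pi_set finite_univ]
  simp only [mem_preimage, mem_univ_pi, interior_Icc, mem_Ioo]

lemma F0_eq_cube : F0 d = cube d 0 1 := by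
  ext x; simp [F0, cube]

lemma Qone_eq_cube : Qone d = cube d 1 1 := by
  ext x; simp [Qone, cube]

-- `l' i * 5 ^ m < l i + 5 ^ m` is `(l' i - 1) * 5 ^ m < l i` free of truncated subtraction.
lemma cube_subset_cube {n m : ℕ} {l l' : Fin d → ℕ}
    (h : ∀ i, l' i * 5 ^ m < l i + 5 ^ m ∧ l i ≤ l' i * 5 ^ m) :
    cube d (n + m) l ⊆ cube d n l' := by
  intro x hx i
  obtain ⟨hlow, hhigh⟩ := h i
  have hlow' : ((l' i : ℝ) - 1) * 5 ^ m ≤ l i - 1 := by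
    have : l' i * 5 ^ m + 1 ≤ l i + 5 ^ m := hlow
    have : ((l' i * 5 ^ m + 1 : ℕ) : ℝ) ≤ ((l i + 5 ^ m : ℕ) : ℝ) := by exact_mod_cast this
    push_cast at this; linarith
  have hhigh' : (l i : ℝ) ≤ l' i * 5 ^ m := by exact_mod_cast hhigh
  have h5 : (0 : ℝ) < 5 ^ n := by positivity
  have h5m : (0 : ℝ) < 5 ^ m := by positivity
  obtain ⟨hx1, hx2⟩ := hx i
  rw [pow_add] at hx1 hx2
  constructor
  · refine le_trans ?_ hx1
    rw [div_le_div_iff₀ h5 (by positivity)]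
    nlinarith
  · refine hx2.trans ?_
    rw [div_le_div_iff₀ (by positivity) h5]
    nlinarith

lemma index_bounds_of_mem_interior_cube {n m : ℕ} {l l' : Fin d → ℕ} {p : Pt d}
    (hp : p ∈ interior (cube d (n + m) l)) (hp' : p ∈ cube d n l') (i : Fin d) :
    l' i * 5 ^ m < l i + 5 ^ m ∧ l i ≤ l' i * 5 ^ m := by
  obtain ⟨hp1, hp2⟩ := mem_interior_cube_iff.mp hp i
  obtain ⟨hq1, hq2⟩ := hp' i
  have h5 : (0 : ℝ) < 5 ^ n := by positivity
  have h5m : (0 : ℝ) < 5 ^ m := by positivity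
  rw [pow_add] at hp1 hp2
  constructor
  · have : ((l' i : ℝ) - 1) / 5 ^ n < l i / (5 ^ n * 5 ^ m) := hq1.trans_lt hp2
    rw [div_lt_div_iff₀ h5 (by positivity)] at this
    have : (l' i * 5 ^ m : ℝ) < l i + 5 ^ m := by nlinarith
    exact_mod_cast this
  · have : ((l i : ℝ) - 1) / (5 ^ n * 5 ^ m) < l' i / 5 ^ n := hp1.trans_le hq2
    rw [div_lt_div_iff₀ (by positivity) h5] at this
    have : (l i : ℝ) < l' i * 5 ^ m + 1 := by nlinarith
    have : l i < l' i * 5 ^ m + 1 := by exact_mod_cast this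
    omega

lemma exists_coord_of_mem_frontier_F0 {p : Pt d} (hp : p ∈ frontier (F0 d)) :
    ∃ j, p j ≤ 0 ∨ 1 ≤ p j := by
  have hF0 : F0 d = WithLp.ofLp ⁻¹' univ.pi fun _ => Icc 0 1 := by
    ext x; simp only [F0, mem_ofPred_eq, mem_preimage, mem_univ_pi]
  rw [hF0, frontier, interior_ofLp_preimage, interior_pi_set finite_univ] at hp
  simp only [Set.mem_sdiff, mem_preimage, mem_univ_pi, interior_Icc, mem_Ioo, not_forall] at hp
  obtain ⟨j, hj⟩ := hp.2
  exact ⟨j, by contrapose! hj; exact hj⟩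

lemma mem_F1_of_coord {x : Pt d} (hx : x ∈ F0 d) {j : Fin d} (hj : x j ≤ 1 / 5 ∨ 4 / 5 ≤ x j) :
    x ∈ F1 d := by
  refine ⟨hx, ?_⟩
  simp only [mem_iUnion, mem_ofPred_eq, not_exists]
  rintro i ⟨hbefore, hi, hafter⟩
  have hxj : 1 / 5 < x j ∧ x j < 4 / 5 := by
    rcases lt_trichotomy j i with h | rfl | h
    · obtain ⟨h1, h2⟩ := hbefore j h; constructor <;> linarith
    · rcases hi with ⟨h1, h2⟩ | ⟨h1, h2⟩ <;> constructor <;> linarith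
    · obtain ⟨h1, h2⟩ := hafter j h; constructor <;> linarith
  rcases hj with h | h <;> linarith [hxj.1, hxj.2]

lemma exists_coord_of_mem_G1 {x : Pt d} (hx : x ∈ G1 d) :
    x ∈ F0 d ∧ ∃ j, x j ≤ 1 / 5 ∨ 4 / 5 ≤ x j := by
  simp only [G1, mem_iUnion, mem_ofPred_eq] at hx
  obtain ⟨Q, ⟨⟨⟨l, hl, rfl⟩, -⟩, p, hpQ, hpF⟩, hxQ⟩ := hx
  have hsub : cube d (0 + 1) l ⊆ cube d 0 1 :=
    cube_subset_cube fun i => by have := hl i; simp only [Pi.one_apply, pow_one]; omega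
  refine ⟨F0_eq_cube ▸ hsub hxQ, ?_⟩
  obtain ⟨j, hj⟩ := exists_coord_of_mem_frontier_F0 hpF
  obtain ⟨hp1, hp2⟩ := hpQ j
  obtain ⟨hx1, hx2⟩ := hxQ j
  rw [pow_one] at hp1 hp2 hx1 hx2
  exact ⟨j, hj.imp (fun h => by linarith) (fun h => by linarith)⟩

lemma index_of_cube_mem_QcolOf_G1 {l : Fin d → ℕ} (h : cube d 1 l ∈ QcolOf d 1 (G1 d)) :
    (∀ i, 1 ≤ l i ∧ l i ≤ 5) ∧ ∃ j, l j = 1 ∨ l j = 5 := by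
  obtain ⟨-, p, hp, hpG⟩ := h
  obtain ⟨hpF0, j, hj⟩ := exists_coord_of_mem_G1 hpG
  have hbounds (i : Fin d) : 1 ≤ l i ∧ l i ≤ 5 := by
    have := index_bounds_of_mem_interior_cube (n := 0) (m := 1) hp (F0_eq_cube ▸ hpF0) i
    simp only [Pi.one_apply, pow_one] at this
    omega
  refine ⟨hbounds, j, ?_⟩
  have := hbounds j
  obtain ⟨hp1, hp2⟩ := mem_interior_cube_iff.mp hp j
  rw [pow_one] at hp1 hp2
  rcases hj with h | h
  · have : (l j : ℝ) < 2 := by linarith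
    have : l j < 2 := by exact_mod_cast this
    omega
  · have : (4 : ℝ) < l j := by linarith
    have : 4 < l j := by exact_mod_cast this
    omega

lemma cube_mem_QcolOf_F1_of_edge {l : Fin d → ℕ} (hl : ∀ i, 1 ≤ l i ∧ l i ≤ 5) {j : Fin d}
    (hj : l j = 1 ∨ l j = 5) : cube d 1 l ∈ QcolOf d 1 (F1 d) := by
  refine ⟨⟨l, hl, rfl⟩, WithLp.toLp 2 fun i => (2 * (l i : ℝ) - 1) / 10, ?_, ?_⟩
  · refine mem_interior_cube_iff.mpr fun i => ?_
    rw [pow_one]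
    constructor <;> linarith
  · refine mem_F1_of_coord (j := j) (fun i => ?_) ?_
    · have h1 : (1 : ℝ) ≤ l i := by exact_mod_cast (hl i).1
      have h5 : (l i : ℝ) ≤ 5 := by exact_mod_cast (hl i).2
      rw [mem_Icc]
      constructor <;> linarith
    · rcases hj with h | h <;> norm_num [h]

lemma exists_digit {t : ℝ} (ht : t ∈ Icc (0 : ℝ) 1) :
    ∃ k : ℕ, (1 ≤ k ∧ k ≤ 5) ∧ ∃ t' ∈ Icc (0 : ℝ) 1, t = ((k : ℝ) - 1) / 5 + t' / 5 := by
  obtain ⟨ht0, ht1⟩ := ht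
  set k := max 1 ⌈5 * t⌉₊ with hk
  have hk_le : (k : ℝ) - 1 ≤ 5 * t := by
    rcases Nat.eq_zero_or_pos ⌈5 * t⌉₊ with h | h
    · have : k = 1 := by omega
      rw [this]; push_cast; linarith
    · have : k = ⌈5 * t⌉₊ := by omega
      rw [this]; linarith [Nat.ceil_lt_add_one (by linarith : 0 ≤ 5 * t)]
  have hle_k : 5 * t ≤ k :=
    (Nat.le_ceil _).trans (by exact_mod_cast le_max_right 1 ⌈5 * t⌉₊)
  refine ⟨k, ⟨le_max_left _ _, max_le (by norm_num) (Nat.ceil_le.mpr (by push_cast; linarith))⟩,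
    5 * t - (k - 1), ⟨by linarith, by linarith⟩, by ring⟩

lemma psi_cons {n k : ℕ} {l : Fin d → ℕ} (t : ℝ) (x : Pt d) :
    psi (d + 1) n (Fin.cons k l) (Pt.cons t x) =
      Pt.cons (((k : ℝ) - 1) / 5 ^ n + t / 5 ^ n) (psi d n l x) := by
  ext i
  refine Fin.cases ?_ (fun j => ?_) i <;> simp [psi]

lemma cons_mem_Fn {t : ℝ} (ht : t ∈ Icc (0 : ℝ) 1) (n : ℕ) {x : Pt d} (hx : x ∈ Gn d (n + 1)) :
    Pt.cons t x ∈ Fn (d + 1) (n + 1) := by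
  induction n generalizing t x with
  | zero =>
    obtain ⟨hxF0, j, hj⟩ := exists_coord_of_mem_G1 hx
    refine mem_F1_of_coord (j := j.succ) (fun i => ?_) (by simpa using hj)
    refine Fin.cases ?_ (fun i => ?_) i
    · simpa using ht
    · simpa using hxF0 i
  | succ n ih =>
    rw [Gn] at hx
    simp only [mem_iUnion, mem_ofPred_eq, mem_image] at hx
    obtain ⟨l, hl, y, hy, rfl⟩ := hx
    obtain ⟨hbounds, j, hj⟩ := index_of_cube_mem_QcolOf_G1 hl
    obtain ⟨k, hk, t', ht', rfl⟩ := exists_digit ht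
    rw [Fn]
    simp only [mem_iUnion, mem_ofPred_eq, mem_image]
    refine ⟨Fin.cons k l, ?_, Pt.cons t' y, ih ht' hy, by rw [psi_cons, pow_one]⟩
    refine cube_mem_QcolOf_F1_of_edge (j := j.succ) (fun i => ?_) (by simpa using hj)
    exact Fin.cases (by simpa using hk) (fun i => by simpa using hbounds i) i

lemma cons_mem_Fset {t : ℝ} (ht : t ∈ Icc (0 : ℝ) 1) {x : Pt d} (hx : x ∈ Gset d) :
    Pt.cons t x ∈ Fset (d + 1) := by
  refine mem_iInter.mpr fun n => ?_
  cases n with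
  | zero =>
    refine fun i => Fin.cases ?_ (fun i => ?_) i
    · simpa using ht
    · simpa using hx.1 i
  | succ n => exact cons_mem_Fn ht n (mem_iInter₂.mp hx.2 (n + 1) n.succ_pos)

lemma cube_cons_mem_QcolOf_Fset {n k : ℕ} {l : Fin d → ℕ} (hl : ∀ i, 1 ≤ l i ∧ l i ≤ 5 ^ n)
    (hk : 1 ≤ k ∧ k ≤ 5 ^ n) (hG : (interior (cube d n l) ∩ Gset d).Nonempty) :
    cube (d + 1) n (Fin.cons k l) ∈ QcolOf (d + 1) n (Fset (d + 1)) := by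
  obtain ⟨p, hp, hpG⟩ := hG
  have h5 : (0 : ℝ) < 5 ^ n := by positivity
  have hk1 : (1 : ℝ) ≤ k := by exact_mod_cast hk.1
  have hk5 : (k : ℝ) ≤ 5 ^ n := by exact_mod_cast hk.2
  refine ⟨⟨Fin.cons k l, fun i => Fin.cases (by simpa using hk) (fun i => by simpa using hl i) i,
    rfl⟩, Pt.cons ((k - 1 / 2) / 5 ^ n) p, ?_, cons_mem_Fset ?_ hpG⟩
  · refine mem_interior_cube_iff.mpr fun i => Fin.cases ?_ (fun i => ?_) i
    · simp only [Fin.cons_zero, Pt.cons_zero]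
      constructor <;> gcongr <;> linarith
    · simpa using mem_interior_cube_iff.mp hp i
  · constructor
    · exact div_nonneg (by linarith) h5.le
    · rw [div_le_one h5]; linarith

end

lemma rect3_cube_eq (m i : ℕ) (l : Fin 2 → ℕ) :
    rect3 m i (cube 2 (1 + m) l) = cube 3 (1 + m) (Fin.cons (5 ^ m + i) l) := by
  ext x
  simp only [rect3, cube, mem_ofPred_eq, mem_Icc, Fin.forall_fin_succ (n := 2), Fin.cons_zero,
    Fin.cons_succ, add_comm 1 m]
  push_cast
  ring_nf

theorem statement17_general (m : ℕ) (Qt : Set (Pt 2))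
    (hQt : Qt ∈ QcolOf 2 (m + 1) (Gset 2 ∩ Qone 2)) :
    (∀ i ≤ 5 ^ m + 1, rect3 m i Qt ∈ QcolOf 3 (m + 1) (Fset 3)) ∧
    rect3 m 0 Qt ∈ Sm 3 1 m {Qone 3} ∧
    rect3 m (5 ^ m + 1) Qt ∈ Sm 3 1 m (GamC 3 1 (Qone 3)) := by
  obtain ⟨⟨l, hl, rfl⟩, p, hp, hpG, hpQ⟩ := hQt
  rw [add_comm m 1] at hl hp ⊢
  rw [Qone_eq_cube] at hpQ
  have hl_le (i : Fin 2) : 5 ^ m < l i + 5 ^ m ∧ l i ≤ 5 ^ m := by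
    simpa using index_bounds_of_mem_interior_cube hp hpQ i
  have h5m : 1 ≤ 5 ^ m := Nat.one_le_pow _ _ (by norm_num)
  have hrect (i : ℕ) (hi : i ≤ 5 ^ m + 1) :
      rect3 m i (cube 2 (1 + m) l) ∈ QcolOf 3 (1 + m) (Fset 3) := by
    rw [rect3_cube_eq]
    exact cube_cons_mem_QcolOf_Fset hl ⟨by omega, by rw [pow_add]; omega⟩ ⟨p, hp, hpG⟩
  have hfirst : rect3 m 0 (cube 2 (1 + m) l) ⊆ Qone 3 := by
    rw [rect3_cube_eq, Qone_eq_cube]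
    refine cube_subset_cube fun i => Fin.cases ?_ (fun i => by simpa using hl_le i) i
    simp only [Fin.cons_zero, Pi.one_apply]
    omega
  have hlast : rect3 m (5 ^ m + 1) (cube 2 (1 + m) l) ⊆ cube 3 1 (Fin.cons 3 1) := by
    rw [rect3_cube_eq]
    refine cube_subset_cube fun i => Fin.cases ?_ (fun i => by simpa using hl_le i) i
    simp only [Fin.cons_zero]
    omega
  have hcell : cube 3 1 (Fin.cons 3 1) ∈ GamC 3 1 (Qone 3) := by
    have hsub : cube 2 (1 + m) l ⊆ cube 2 1 1 := cube_subset_cube fun i => by simpa using hl_le i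
    refine ⟨cube_cons_mem_QcolOf_Fset (by simp) (by norm_num) ⟨p, interior_mono hsub hp, hpG⟩, ?_⟩
    rintro ⟨-, x, hx, hxQ⟩
    have h1 := (hx 0).1
    have h2 := (hxQ 0).2
    norm_num at h1 h2
    linarith
  exact ⟨hrect, ⟨hrect 0 (Nat.zero_le _), Qone 3, rfl, hfirst⟩, ⟨hrect _ le_rfl, _, hcell, hlast⟩⟩

/-- The chain of boxes `Q_{Q̃,i}`, `0 ≤ i ≤ 5^m + 1`, over a square
`Q̃ ∈ 𝒬_{m+1}⁽²⁾(G⁽²⁾ ∩ [0,1/5]²)` consists of level-`(m+1)` cells of `F⁽³⁾`, starting in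
`Sᵐ({Q₁})` and ending in `Sᵐ(Γ(Q₁)ᶜ)`, where `Q₁ = [0,1/5]³`. -/
theorem statement17 (m : ℕ) (hm : 1 ≤ m) (Qt : Set (Pt 2))
    (hQt : Qt ∈ QcolOf 2 (m + 1) (Gset 2 ∩ Qone 2)) :
    (∀ i ≤ 5 ^ m + 1, rect3 m i Qt ∈ QcolOf 3 (m + 1) (Fset 3)) ∧
    rect3 m 0 Qt ∈ Sm 3 1 m {Qone 3} ∧
    rect3 m (5 ^ m + 1) Qt ∈ Sm 3 1 m (GamC 3 1 (Qone 3)) :=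
  statement17_general m Qt hQt
end
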